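/- For the state D_{2k} defined from the product vectors φ₁,...,φ₇ as in the paper, Tr(W_{2k} · D_{2k}) = −1/(7k). Together with SN(D_{2k}) ≤ 2 and SN(D_{2k}^Γ) ≤ 2, this proves W_{2k} is an atomic entanglement witness. -/

import Mathlib

open Matrix ComplexOrder Kronecker

noncomputable section

/-- The reduction map `R_k(Y) = Tr(Y)·𝕀_k − Y` on `k × k` complex matrices. -/
def Rmap (k : ℕ) (Y : Matrix (Fin k) (Fin k) ℂ) : Matrix (Fin k) (Fin k) ℂ :=
  Y.trace • (1 : Matrix (Fin k) (Fin k) ℂ) - Y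

/-- The map `Ψ⁰_{2k}` on `2k × 2k` complex matrices (indexed by `Fin k ⊕ Fin k`),
defined blockwise via the reduction map `R_k`. -/
def Psi (k : ℕ) (X : Matrix (Fin k ⊕ Fin k) (Fin k ⊕ Fin k) ℂ) :
    Matrix (Fin k ⊕ Fin k) (Fin k ⊕ Fin k) ℂ :=
  ((k : ℂ))⁻¹ • Matrix.fromBlocks
    ((X.toBlocks₂₂.trace) • (1 : Matrix (Fin k) (Fin k) ℂ))
    (-(X.toBlocks₁₂ + Rmap k X.toBlocks₂₁))
    (-(X.toBlocks₂₁ + Rmap k X.toBlocks₁₂))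
    ((X.toBlocks₁₁.trace) • (1 : Matrix (Fin k) (Fin k) ℂ))

/-- The Choi matrix `W_{2k} = Σ_{i,j} e_{ij} ⊗ Ψ⁰_{2k}(e_{ij})` of the map `Ψ⁰_{2k}`. -/
def Wmat (k : ℕ) :
    Matrix ((Fin k ⊕ Fin k) × (Fin k ⊕ Fin k)) ((Fin k ⊕ Fin k) × (Fin k ⊕ Fin k)) ℂ :=
  ∑ i : Fin k ⊕ Fin k, ∑ j : Fin k ⊕ Fin k,
    (Matrix.single i j (1 : ℂ)) ⊗ₖ Psi k (Matrix.single i j (1 : ℂ))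

/-- The standard basis vector `e_i` of `ℂ^{2k}`. -/
def uvec (k : ℕ) (i : Fin k ⊕ Fin k) : (Fin k ⊕ Fin k) → ℂ := Pi.single i 1

/-- Elementary tensor `a ⊗ b` of two vectors in `ℂ^{2k}`. -/
def tensv (k : ℕ) (a b : (Fin k ⊕ Fin k) → ℂ) : (Fin k ⊕ Fin k) × (Fin k ⊕ Fin k) → ℂ :=
  fun p => a p.1 * b p.2

/-- The rank-one projector `|v⟩⟨v|` as a matrix. -/
def projv (k : ℕ) (v : (Fin k ⊕ Fin k) × (Fin k ⊕ Fin k) → ℂ) :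
    Matrix ((Fin k ⊕ Fin k) × (Fin k ⊕ Fin k)) ((Fin k ⊕ Fin k) × (Fin k ⊕ Fin k)) ℂ :=
  vecMulVec v (star v)

/-- Partial transposition (on the second tensor factor). -/
def ptI (k : ℕ)
    (M : Matrix ((Fin k ⊕ Fin k) × (Fin k ⊕ Fin k)) ((Fin k ⊕ Fin k) × (Fin k ⊕ Fin k)) ℂ) :
    Matrix ((Fin k ⊕ Fin k) × (Fin k ⊕ Fin k)) ((Fin k ⊕ Fin k) × (Fin k ⊕ Fin k)) ℂ :=
  Matrix.of fun p q => M (p.1, q.2) (q.1, p.2)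

/-- `σ` has Schmidt number at most `2`: it is a sum of (unnormalized) rank-one
projectors onto vectors of Schmidt rank at most `2`. -/
def SchmidtNumberLE2 (k : ℕ)
    (σ : Matrix ((Fin k ⊕ Fin k) × (Fin k ⊕ Fin k)) ((Fin k ⊕ Fin k) × (Fin k ⊕ Fin k)) ℂ) :
    Prop :=
  ∃ (n : ℕ) (v : Fin n → ((Fin k ⊕ Fin k) × (Fin k ⊕ Fin k) → ℂ)),
    (∀ m, ∃ a₁ b₁ a₂ b₂ : (Fin k ⊕ Fin k) → ℂ, v m = tensv k a₁ b₁ + tensv k a₂ b₂) ∧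
    σ = ∑ m, projv k (v m)

/-- A `2`-entanglement witness: a Hermitian matrix whose quadratic form is
nonnegative on every vector of Schmidt rank at most `2`. -/
def IsTwoEW (k : ℕ)
    (W : Matrix ((Fin k ⊕ Fin k) × (Fin k ⊕ Fin k)) ((Fin k ⊕ Fin k) × (Fin k ⊕ Fin k)) ℂ) :
    Prop :=
  W.IsHermitian ∧ ∀ a₁ b₁ a₂ b₂ : (Fin k ⊕ Fin k) → ℂ,
    0 ≤ (star (tensv k a₁ b₁ + tensv k a₂ b₂) ⬝ᵥ
        W.mulVec (tensv k a₁ b₁ + tensv k a₂ b₂)).re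

/-!
The Choi matrix has entries `W_{(m,p),(n,q)} = Ψ⁰_{2k}(e_{mn})_{pq}`, so `Tr(W_{2k} D_{2k})` is a
signed sum of eleven entries of `Ψ⁰_{2k}` applied to matrix units, which add up to `-1/(7k)`.
If `W_{2k} = W₁ + W₂^Γ` with 2-EWs `W₁, W₂`, then
`Tr(W_{2k} D_{2k}) = Tr(W₁ D_{2k}) + Tr(W₂ D_{2k}^Γ)`, and both `D_{2k}` and `D_{2k}^Γ` are
positive combinations of projectors onto vectors of Schmidt rank at most `2`, so both terms
have nonnegative real part: a contradiction.
-/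

section Choi

variable {n m R : Type*} [Fintype n] [DecidableEq n] [Semiring R]

def choiMatrix (Φ : Matrix n n R → Matrix m m R) : Matrix (n × m) (n × m) R :=
  ∑ i, ∑ j, single i j 1 ⊗ₖ Φ (single i j 1)

theorem choiMatrix_apply (Φ : Matrix n n R → Matrix m m R) (a b : n) (p q : m) :
    choiMatrix Φ (a, p) (b, q) = Φ (single a b 1) p q := by
  simp [choiMatrix, Matrix.sum_apply, kroneckerMap_apply, single_apply, ite_and]

end Choi

section Witness

variable {k : ℕ}

local notation "Idx" k:max => (Fin k ⊕ Fin k) × (Fin k ⊕ Fin k)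

local notation "Mat" k:max => Matrix (Idx k) (Idx k) ℂ

theorem Wmat_apply (a b p q : Fin k ⊕ Fin k) :
    Wmat k (a, p) (b, q) = Psi k (single a b 1) p q :=
  choiMatrix_apply (Psi k) a b p q

theorem tensv_uvec_uvec (i j : Fin k ⊕ Fin k) :
    tensv k (uvec k i) (uvec k j) = Pi.single (i, j) 1 := by
  ext ⟨p, q⟩
  simp [tensv, uvec, Pi.single_apply, ← ite_and, and_comm]

theorem ptI_vecMulVec_tensv (a b c d : Fin k ⊕ Fin k → ℂ) :
    ptI k (vecMulVec (tensv k a b) (star (tensv k c d)))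
      = vecMulVec (tensv k a (star d)) (star (tensv k c (star b))) := by
  ext p q
  simp only [ptI, of_apply, vecMulVec_apply, tensv, Pi.star_apply, star_mul', star_star]
  ring

theorem trace_ptI_mul (A B : Mat k) : (ptI k A * B).trace = (A * ptI k B).trace := by
  let σ : Equiv.Perm ((Idx k) × (Idx k)) :=
    Function.Involutive.toPerm (fun x => ((x.1.1, x.2.2), (x.2.1, x.1.2))) fun _ => rfl
  simp only [trace, diag, mul_apply, ptI, of_apply, ← Fintype.sum_prod_type']
  exact Fintype.sum_equiv σ _ _ fun _ => rfl

theorem ptI_add (A B : Mat k) : ptI k (A + B) = ptI k A + ptI k B := rfl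

theorem ptI_sub (A B : Mat k) : ptI k (A - B) = ptI k A - ptI k B := rfl

theorem ptI_smul (c : ℂ) (A : Mat k) : ptI k (c • A) = c • ptI k A := rfl

theorem tensv_smul_left (c : ℂ) (a b : Fin k ⊕ Fin k → ℂ) :
    tensv k (c • a) b = c • tensv k a b := by
  ext p
  simp [tensv, mul_assoc]

theorem tensv_zero_left (b : Fin k ⊕ Fin k → ℂ) : tensv k 0 b = 0 := by
  ext p
  simp [tensv]

theorem star_uvec (i : Fin k ⊕ Fin k) : star (uvec k i) = uvec k i := by
  simp [uvec, Pi.star_single]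

theorem tensv_neg_left (a b : Fin k ⊕ Fin k → ℂ) : tensv k (-a) b = -tensv k a b := by
  ext p
  simp [tensv]

theorem projv_smul (c : ℂ) (v : Idx k → ℂ) :
    projv k (c • v) = (c * star c) • projv k v := by
  simp [projv, star_smul, mul_smul, smul_comm c]

namespace SchmidtNumberLE2

theorem add {σ τ : Mat k} (hσ : SchmidtNumberLE2 k σ) (hτ : SchmidtNumberLE2 k τ) :
    SchmidtNumberLE2 k (σ + τ) := by
  obtain ⟨n, v, hv, rfl⟩ := hσ
  obtain ⟨m, w, hw, rfl⟩ := hτ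
  refine ⟨n + m, Fin.append v w, fun i => ?_, by simp [Fin.sum_univ_add]⟩
  cases i using Fin.addCases <;> simp [hv, hw]

theorem smul {σ : Mat k} (hσ : SchmidtNumberLE2 k σ) {c : ℂ} (hc : 0 ≤ c) :
    SchmidtNumberLE2 k (c • σ) := by
  obtain ⟨n, v, hv, rfl⟩ := hσ
  have hsq : (√c.re : ℂ) * star (√c.re : ℂ) = c := by
    rw [Complex.star_def, Complex.conj_ofReal, ← Complex.ofReal_mul,
      Real.mul_self_sqrt (Complex.nonneg_iff.1 hc).1, ← Complex.eq_re_of_ofReal_le hc]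
  refine ⟨n, fun i => (√c.re : ℂ) • v i, fun i => ?_, ?_⟩
  · obtain ⟨a₁, b₁, a₂, b₂, h⟩ := hv i
    refine ⟨(√c.re : ℂ) • a₁, b₁, (√c.re : ℂ) • a₂, b₂, ?_⟩
    rw [tensv_smul_left, tensv_smul_left, ← smul_add, ← h]
  · simp only [projv_smul, hsq, Finset.smul_sum]

theorem projv_add_tensv (a₁ b₁ a₂ b₂ : Fin k ⊕ Fin k → ℂ) :
    SchmidtNumberLE2 k (projv k (tensv k a₁ b₁ + tensv k a₂ b₂)) :=
  ⟨1, fun _ => tensv k a₁ b₁ + tensv k a₂ b₂, fun _ => ⟨a₁, b₁, a₂, b₂, rfl⟩,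
    by simp⟩

theorem projv_tensv (a b : Fin k ⊕ Fin k → ℂ) :
    SchmidtNumberLE2 k (projv k (tensv k a b)) := by
  simpa [tensv_zero_left] using projv_add_tensv a b 0 0

theorem projv_sub_tensv (a₁ b₁ a₂ b₂ : Fin k ⊕ Fin k → ℂ) :
    SchmidtNumberLE2 k (projv k (tensv k a₁ b₁ - tensv k a₂ b₂)) := by
  simpa [tensv_neg_left, sub_eq_add_neg] using projv_add_tensv a₁ b₁ (-a₂) b₂

end SchmidtNumberLE2

theorem IsTwoEW.re_trace_mul_nonneg {W σ : Mat k}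
    (hW : IsTwoEW k W) (hσ : SchmidtNumberLE2 k σ) : 0 ≤ (W * σ).trace.re := by
  obtain ⟨n, v, hv, rfl⟩ := hσ
  simp only [Finset.mul_sum, trace_sum, Complex.re_sum, projv, mul_vecMulVec, trace_vecMulVec]
  refine Finset.sum_nonneg fun i _ => ?_
  obtain ⟨a₁, b₁, a₂, b₂, h⟩ := hv i
  rw [dotProduct_comm, h]
  exact hW.2 a₁ b₁ a₂ b₂

theorem not_exists_isTwoEW_add_ptI_of_re_trace_mul_neg {W σ : Mat k}
    (hσ : SchmidtNumberLE2 k σ) (hσΓ : SchmidtNumberLE2 k (ptI k σ))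
    (hWσ : (W * σ).trace.re < 0) :
    ¬ ∃ W₁ W₂, IsTwoEW k W₁ ∧ IsTwoEW k W₂ ∧ W = W₁ + ptI k W₂ := by
  rintro ⟨W₁, W₂, hW₁, hW₂, rfl⟩
  have h₁ := hW₁.re_trace_mul_nonneg hσ
  have h₂ := hW₂.re_trace_mul_nonneg hσΓ
  rw [add_mul, trace_add, trace_ptI_mul, Complex.add_re] at hWσ
  linarith

open Sum

/-- `D_{2k}` is `detectingState ⟨0, _⟩ ⟨k - 1, _⟩`: the paper's `e₁, e_k, e_{k+1}, e_{2k}`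
are `uvec k` at `inl a, inl b, inr a, inr b`. -/
def detectingState (a b : Fin k) :
    Mat k :=
  (7 : ℂ)⁻¹ • (projv k (tensv k (uvec k (inl a)) (uvec k (inl a))
      + tensv k (uvec k (inr a)) (uvec k (inr a)))
    + projv k (tensv k (uvec k (inr a)) (uvec k (inl a))
      - tensv k (uvec k (inl b)) (uvec k (inr b)))
    + projv k (tensv k (uvec k (inl a)) (uvec k (inr a)))
    + projv k (tensv k (uvec k (inl b)) (uvec k (inl a)))
    + projv k (tensv k (uvec k (inr a)) (uvec k (inr b))))

theorem ptI_detectingState (a b : Fin k) :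
    ptI k (detectingState a b) =
      (7 : ℂ)⁻¹ • (projv k (tensv k (uvec k (inl a)) (uvec k (inl a)))
        + projv k (tensv k (uvec k (inr a)) (uvec k (inr a)))
        + projv k (tensv k (uvec k (inl b)) (uvec k (inr b)))
        + projv k (tensv k (uvec k (inl a)) (uvec k (inr a))
          + tensv k (uvec k (inr a)) (uvec k (inl a)))
        + projv k (tensv k (uvec k (inl b)) (uvec k (inl a))
          - tensv k (uvec k (inr a)) (uvec k (inr b)))) := by
  simp only [detectingState, projv, ptI_smul, ptI_add, ptI_sub, star_add, star_sub, add_vecMulVec,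
    vecMulVec_add, sub_vecMulVec, vecMulVec_sub, ptI_vecMulVec_tensv, star_uvec]
  congr 1
  abel

theorem schmidtNumberLE2_detectingState (a b : Fin k) :
    SchmidtNumberLE2 k (detectingState a b) := by
  refine .smul (.add (.add (.add (.add ?_ ?_) ?_) ?_) ?_) (by positivity)
  all_goals first
    | exact .projv_tensv _ _ | exact .projv_add_tensv _ _ _ _ | exact .projv_sub_tensv _ _ _ _

theorem schmidtNumberLE2_ptI_detectingState (a b : Fin k) :
    SchmidtNumberLE2 k (ptI k (detectingState a b)) := by
  rw [ptI_detectingState]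
  refine .smul (.add (.add (.add (.add ?_ ?_) ?_) ?_) ?_) (by positivity)
  all_goals first
    | exact .projv_tensv _ _ | exact .projv_add_tensv _ _ _ _ | exact .projv_sub_tensv _ _ _ _

theorem trace_Wmat_mul_detectingState {a b : Fin k} (hab : a ≠ b) :
    (Wmat k * detectingState a b).trace = -(1 / (7 * (k : ℂ))) := by
  simp only [detectingState, projv, tensv_uvec_uvec, Matrix.mul_smul, mul_add, trace_smul,
    trace_add, mul_vecMulVec, trace_vecMulVec, star_add, star_sub, Pi.star_single, star_one,
    mulVec_add, mulVec_sub, dotProduct_add, dotProduct_sub, mulVec_single_one,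
    dotProduct_single_one, Pi.add_apply, Pi.sub_apply, col_apply, Wmat_apply]
  simp [Psi, Rmap, toBlocks₁₁, toBlocks₁₂, toBlocks₂₁, toBlocks₂₂, single_apply, trace,
    diag, one_apply, hab, hab.symm, mul_comm]

end Witness

theorem stmt16 (k : ℕ) (hk : 2 ≤ k)
    (φ₁ φ₂ φ₃ φ₄ φ₅ φ₆ φ₇ : (Fin k ⊕ Fin k) × (Fin k ⊕ Fin k) → ℂ)
    (h₁ : φ₁ = tensv k (uvec k (Sum.inl ⟨0, by omega⟩)) (uvec k (Sum.inl ⟨0, by omega⟩)))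
    (h₂ : φ₂ = tensv k (uvec k (Sum.inl ⟨0, by omega⟩)) (uvec k (Sum.inr ⟨0, by omega⟩)))
    (h₃ : φ₃ = tensv k (uvec k (Sum.inl ⟨k - 1, by omega⟩)) (uvec k (Sum.inl ⟨0, by omega⟩)))
    (h₄ : φ₄ = tensv k (uvec k (Sum.inl ⟨k - 1, by omega⟩)) (uvec k (Sum.inr ⟨k - 1, by omega⟩)))
    (h₅ : φ₅ = tensv k (uvec k (Sum.inr ⟨0, by omega⟩)) (uvec k (Sum.inl ⟨0, by omega⟩)))
    (h₆ : φ₆ = tensv k (uvec k (Sum.inr ⟨0, by omega⟩)) (uvec k (Sum.inr ⟨0, by omega⟩)))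
    (h₇ : φ₇ = tensv k (uvec k (Sum.inr ⟨0, by omega⟩)) (uvec k (Sum.inr ⟨k - 1, by omega⟩)))
    (D : Matrix ((Fin k ⊕ Fin k) × (Fin k ⊕ Fin k)) ((Fin k ⊕ Fin k) × (Fin k ⊕ Fin k)) ℂ)
    (hD : D = (7 : ℂ)⁻¹ • (projv k (φ₁ + φ₆) + projv k (φ₅ - φ₄)
        + projv k φ₂ + projv k φ₃ + projv k φ₇)) :
    (Wmat k * D).trace = -(1 / (7 * (k : ℂ))) ∧
    ¬ ∃ W₁ W₂ :
        Matrix ((Fin k ⊕ Fin k) × (Fin k ⊕ Fin k)) ((Fin k ⊕ Fin k) × (Fin k ⊕ Fin k)) ℂ,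
      IsTwoEW k W₁ ∧ IsTwoEW k W₂ ∧ Wmat k = W₁ + ptI k W₂ := by
  subst h₁ h₂ h₃ h₄ h₅ h₆ h₇ hD
  set a : Fin k := ⟨0, by omega⟩
  set b : Fin k := ⟨k - 1, by omega⟩
  have hab : a ≠ b := by
    rw [ne_eq, Fin.mk.injEq]
    omega
  have htrace := trace_Wmat_mul_detectingState hab
  refine ⟨htrace, not_exists_isTwoEW_add_ptI_of_re_trace_mul_neg
    (schmidtNumberLE2_detectingState a b) (schmidtNumberLE2_ptI_detectingState a b) ?_⟩
  rw [htrace]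
  simpa using (by omega : 0 < k)
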